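/- Under the abstract channel axioms, for natural numbers m ≥ 0, n ≥ 1, p ≥ 1, q ≥ 0: if Z_{1^{p-1}0^q}(x) ≤ Z_{0^m 1^{n-1}}(x) for all x ∈ [0,1], then for every channel W, Z(W^{1^p 0^q}) ≤ Z(W^{0^m 1^n}). -/
import Mathlib


noncomputable def Z0 (x : ℝ) : ℝ := 1 - (1 - x) ^ 2
noncomputable def Z1 (x : ℝ) : ℝ := x ^ 2

noncomputable def Zb : Bool → ℝ → ℝ
  | false => Z0
  | true => Z1

/-- `Zpath α x` applies `Z_{α_1}` first, then `Z_{α_2}`, etc. -/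
noncomputable def Zpath (α : List Bool) (x : ℝ) : ℝ := α.foldl (fun y b => Zb b y) x

/-- `chpath up down α W` applies the polarization transforms (false = up, true = down)
along `α`, first letter first. -/
def chpath {C : Type*} (up down : C → C) (α : List Bool) (W : C) : C :=
  α.foldl (fun V b => if b then down V else up V) W

lemma Zpath_cons (b : Bool) (α : List Bool) (x : ℝ) :
    Zpath (b :: α) x = Zpath α (Zb b x) := rfl

lemma Zpath_append (α β : List Bool) (x : ℝ) :
    Zpath (α ++ β) x = Zpath β (Zpath α x) := List.foldl_append ..

lemma chpath_cons {C : Type*} (up down : C → C) (b : Bool) (α : List Bool) (W : C) :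
    chpath up down (b :: α) W = chpath up down α (if b then down W else up W) := rfl

lemma chpath_append {C : Type*} (up down : C → C) (α β : List Bool) (W : C) :
    chpath up down (α ++ β) W = chpath up down β (chpath up down α W) :=
  List.foldl_append ..

lemma Zb_mem (b : Bool) {x : ℝ} (hx : x ∈ Set.Icc (0:ℝ) 1) :
    Zb b x ∈ Set.Icc (0:ℝ) 1 := by
  obtain ⟨h0, h1⟩ := hx
  cases b <;> simp only [Zb, Z0, Z1, Set.mem_Icc] <;> constructor <;> nlinarith

lemma Zb_mono (b : Bool) {x y : ℝ} (hx : 0 ≤ x) (hxy : x ≤ y) (hy : y ≤ 1) :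
    Zb b x ≤ Zb b y := by
  cases b <;> simp only [Zb, Z0, Z1] <;> nlinarith

lemma Zpath_mem (α : List Bool) : ∀ {x : ℝ}, x ∈ Set.Icc (0:ℝ) 1 →
    Zpath α x ∈ Set.Icc (0:ℝ) 1 := by
  induction α with
  | nil => intro x hx; exact hx
  | cons b α ih => intro x hx; rw [Zpath_cons]; exact ih (Zb_mem b hx)

lemma Zpath_mono (α : List Bool) : ∀ {x y : ℝ}, x ∈ Set.Icc (0:ℝ) 1 →
    y ∈ Set.Icc (0:ℝ) 1 → x ≤ y → Zpath α x ≤ Zpath α y := by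
  induction α with
  | nil => intro x y _ _ h; exact h
  | cons b α ih =>
    intro x y hx hy hxy
    rw [Zpath_cons, Zpath_cons]
    exact ih (Zb_mem b hx) (Zb_mem b hy) (Zb_mono b hx.1 hxy hy.2)

lemma Zpath_true (k : ℕ) (x : ℝ) :
    Zpath (List.replicate k true) x = x ^ (2 ^ k) := by
  induction k generalizing x with
  | zero => simp [Zpath]
  | succ k ih =>
    rw [List.replicate_succ, Zpath_cons]
    show Zpath (List.replicate k true) (Z1 x) = _
    rw [ih]
    simp only [Z1]
    rw [← pow_mul, pow_succ, mul_comm]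

lemma Zpath_false (k : ℕ) (x : ℝ) :
    Zpath (List.replicate k false) x = 1 - (1 - x) ^ (2 ^ k) := by
  induction k generalizing x with
  | zero => simp [Zpath]
  | succ k ih =>
    rw [List.replicate_succ, Zpath_cons]
    show Zpath (List.replicate k false) (Z0 x) = _
    rw [ih]
    simp only [Z0]
    have : (1 : ℝ) - (1 - (1 - x) ^ 2) = (1 - x) ^ 2 := by ring
    rw [this, ← pow_mul, pow_succ, mul_comm]

section Channel

variable {C : Type*} (up down : C → C) (Z : C → ℝ)
    (hZmem : ∀ W, Z W ∈ Set.Icc (0:ℝ) 1)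
    (hdown : ∀ W, Z (down W) = (Z W) ^ 2)
    (hup_lo : ∀ W, Z W * Real.sqrt (2 - (Z W) ^ 2) ≤ Z (up W))
    (hup_hi : ∀ W, Z (up W) ≤ 1 - (1 - Z W) ^ 2)

include hZmem hdown hup_hi in
lemma Z_le_Zpath : ∀ (α : List Bool) (W : C),
    Z (chpath up down α W) ≤ Zpath α (Z W) := by
  intro α
  induction α with
  | nil => intro W; simp [chpath, Zpath]
  | cons b α ih =>
    intro W
    rw [chpath_cons, Zpath_cons]
    refine (ih _).trans (Zpath_mono α (hZmem _) (Zb_mem b (hZmem W)) ?_)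
    cases b
    · simpa [Zb, Z0] using hup_hi W
    · simpa [Zb, Z1] using (hdown W).le

include hdown in
lemma Z_downs : ∀ (k : ℕ) (W : C),
    Z (chpath up down (List.replicate k true) W) = Z W ^ (2 ^ k) := by
  intro k
  induction k with
  | zero => intro W; simp [chpath]
  | succ k ih =>
    intro W
    rw [List.replicate_succ, chpath_cons]
    simp only [if_true]
    rw [ih, hdown, ← pow_mul, pow_succ, mul_comm]

include hZmem hup_lo in
lemma Z_ups_lower : ∀ (k : ℕ) (W : C),
    1 - Z (chpath up down (List.replicate k false) W) ^ 2 ≤ (1 - Z W ^ 2) ^ (2 ^ k) := by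
  intro k
  induction k with
  | zero => intro W; simp [chpath]
  | succ k ih =>
    intro W
    rw [List.replicate_succ, chpath_cons]
    simp only [if_false, Bool.false_eq_true]
    refine (ih (up W)).trans ?_
    have hx := hZmem W
    obtain ⟨hx0, hx1⟩ := hx
    have h2 : (0:ℝ) ≤ 2 - Z W ^ 2 := by nlinarith
    have hlo := hup_lo W
    have hlhs0 : 0 ≤ Z W * Real.sqrt (2 - Z W ^ 2) :=
      mul_nonneg hx0 (Real.sqrt_nonneg _)
    have hsq : (Z W * Real.sqrt (2 - Z W ^ 2)) ^ 2 ≤ Z (up W) ^ 2 :=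
      pow_le_pow_left₀ hlhs0 hlo 2
    rw [mul_pow, Real.sq_sqrt h2] at hsq
    have key : 1 - Z (up W) ^ 2 ≤ (1 - Z W ^ 2) ^ 2 := by nlinarith
    have hne : 0 ≤ 1 - Z (up W) ^ 2 := by
      obtain ⟨hu0, hu1⟩ := hZmem (up W); nlinarith
    calc (1 - Z (up W) ^ 2) ^ 2 ^ k ≤ ((1 - Z W ^ 2) ^ 2) ^ 2 ^ k :=
          pow_le_pow_left₀ hne key _
    _ = (1 - Z W ^ 2) ^ 2 ^ (k + 1) := by rw [← pow_mul]; congr 1; exact (pow_succ' 2 k).symm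

end Channel

theorem zeros_ones_preceqZ_ones_zeros {C : Type*} (up down : C → C) (Z : C → ℝ)
    (hZmem : ∀ W, Z W ∈ Set.Icc (0:ℝ) 1)
    (hdown : ∀ W, Z (down W) = (Z W) ^ 2)
    (hup_lo : ∀ W, Z W * Real.sqrt (2 - (Z W) ^ 2) ≤ Z (up W))
    (hup_hi : ∀ W, Z (up W) ≤ 1 - (1 - Z W) ^ 2)
    (m n p q : ℕ) (hn : 1 ≤ n) (hp : 1 ≤ p)
    (hBEC : ∀ x ∈ Set.Icc (0:ℝ) 1,
      Zpath (List.replicate (p - 1) true ++ List.replicate q false) x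
        ≤ Zpath (List.replicate m false ++ List.replicate (n - 1) true) x) :
    ∀ W : C,
      Z (chpath up down (List.replicate p true ++ List.replicate q false) W)
        ≤ Z (chpath up down (List.replicate m false ++ List.replicate n true) W) := by
  obtain ⟨p, rfl⟩ : ∃ p', p = p' + 1 := ⟨p - 1, (Nat.succ_pred_eq_of_pos hp).symm⟩
  obtain ⟨n, rfl⟩ : ∃ n', n = n' + 1 := ⟨n - 1, (Nat.succ_pred_eq_of_pos hn).symm⟩
  simp only [Nat.add_sub_cancel] at hBEC
  intro W
  set x := Z W with hxdef
  obtain ⟨hx0, hx1⟩ := hZmem W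
  have hy : Z (down W) ∈ Set.Icc (0:ℝ) 1 := hZmem (down W)
  -- LHS bound
  have hL : Z (chpath up down (List.replicate (p + 1) true ++ List.replicate q false) W)
      ≤ Zpath (List.replicate p true ++ List.replicate q false) (Z (down W)) := by
    rw [List.replicate_succ, List.cons_append, chpath_cons]
    simpa using Z_le_Zpath up down Z hZmem hdown hup_hi _ (down W)
  have hB := hBEC (Z (down W)) hy
  -- RHS computation
  set U := chpath up down (List.replicate m false) W with hU
  obtain ⟨hU0, hU1⟩ := hZmem U
  have hRHS : Z (chpath up down (List.replicate m false ++ List.replicate (n + 1) true) W)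
      = (Z U ^ 2) ^ 2 ^ n := by
    rw [chpath_append, ← hU, Z_downs up down Z hdown, ← pow_mul, pow_succ']
  -- the BEC value of the RHS path
  have hRpath : Zpath (List.replicate m false ++ List.replicate n true) (Z (down W))
      = (1 - (1 - x ^ 2) ^ 2 ^ m) ^ 2 ^ n := by
    rw [Zpath_append, Zpath_false, Zpath_true, hdown]
  -- lower bound the RHS channel value
  have hlow : 1 - Z U ^ 2 ≤ (1 - x ^ 2) ^ 2 ^ m := Z_ups_lower up down Z hZmem hup_lo m W
  have hbase0 : (0:ℝ) ≤ 1 - (1 - x ^ 2) ^ 2 ^ m := by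
    have h1 : (1 - x ^ 2) ^ 2 ^ m ≤ 1 := by
      apply pow_le_one₀ <;> nlinarith
    linarith
  have hfin : (1 - (1 - x ^ 2) ^ 2 ^ m) ^ 2 ^ n ≤ (Z U ^ 2) ^ 2 ^ n :=
    pow_le_pow_left₀ hbase0 (by linarith) _
  calc Z (chpath up down (List.replicate (p + 1) true ++ List.replicate q false) W)
      ≤ Zpath (List.replicate p true ++ List.replicate q false) (Z (down W)) := hL
    _ ≤ Zpath (List.replicate m false ++ List.replicate n true) (Z (down W)) := hB
    _ = (1 - (1 - x ^ 2) ^ 2 ^ m) ^ 2 ^ n := hRpath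
    _ ≤ (Z U ^ 2) ^ 2 ^ n := hfin
    _ = Z (chpath up down (List.replicate m false ++ List.replicate (n + 1) true) W) :=
        hRHS.symm
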